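/- arXiv:2307.13830 — 3 statements merged into one kernel-verified Lean document; each statement's English description precedes it below -/
import Mathlib

section
/- For every γ ∈ ℝ with |γ| ≥ 1 and every s ∈ [0,1] one has ‖R_{iγ}‖_{𝔅(𝔉,𝔥_s)} ≤ |γ|^{s−1}; consequently, if A ∈ 𝔅(𝔥_s,𝔉) for some s ∈ (0,1), then both 1−G_{iγ} and 1−G_{iγ}* have bounded inverses in 𝔅(𝔉) whenever |γ| > max{1, ‖A‖_{𝔅(𝔥_s,𝔉)}^{1/(1−s)}}. -/
open scoped InnerProductSpace ComplexConjugate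

noncomputable section

local notation "⟪" x ", " y "⟫" => @inner ℂ _ _ x y

/-- Abstract context for the paper "On the resolvent of H+A*+A":
`F` is the Hilbert space `𝔉`, `H1` is the space `𝔥₁ = dom(H)` endowed with the graph
norm, `Hm1` is the dual space `𝔥₋₁`.  `j1 : 𝔥₁ ↪ 𝔉` and `jm : 𝔉 ↪ 𝔥₋₁` are the dense
inclusions, `Hop` is `H` viewed as a bounded operator `𝔥₁ → 𝔉`, `Hbar` is its closure
`H̄ : 𝔉 → 𝔥₋₁`, `lamInf = inf σ(H)`, `res = ρ(H)`, `RF z = (-H+z)⁻¹ : 𝔉 → 𝔥₁`,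
`RM z` is its extension `𝔥₋₁ → 𝔉`, `pair` is the duality pairing between `𝔥₋₁` and `𝔥₁`
(conjugate-linear in the first variable) extending the scalar product of `𝔉`,
`ns s` is the scale norm `‖ψ‖_s = ‖(H²+1)^{s/2}ψ‖` on `𝔥₁` (`0 ≤ s ≤ 1`),
`A ∈ 𝔅(𝔥₁,𝔉)` and `Astar : 𝔉 → 𝔥₋₁` is its dual-pairing adjoint. -/
structure Ctx (F H1 Hm1 : Type*)
    [NormedAddCommGroup F] [InnerProductSpace ℂ F] [CompleteSpace F]
    [NormedAddCommGroup H1] [InnerProductSpace ℂ H1] [CompleteSpace H1]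
    [NormedAddCommGroup Hm1] [InnerProductSpace ℂ Hm1] [CompleteSpace Hm1] where
  j1 : H1 →L[ℂ] F
  jm : F →L[ℂ] Hm1
  Hop : H1 →L[ℂ] F
  Hbar : F →L[ℂ] Hm1
  lamInf : ℝ
  res : Set ℂ
  RF : ℂ → (F →L[ℂ] H1)
  RM : ℂ → (Hm1 →L[ℂ] F)
  pair : Hm1 → H1 → ℂ
  ns : ℝ → H1 → ℝ
  A : H1 →L[ℂ] F
  Astar : F →L[ℂ] Hm1
  j1_inj : Function.Injective j1
  j1_dense : DenseRange j1
  jm_inj : Function.Injective jm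
  jm_dense : DenseRange jm
  /-- the norm of `𝔥₁` is the graph norm of `H` -/
  norm1_sq : ∀ ψ : H1, ‖ψ‖ ^ 2 = ‖j1 ψ‖ ^ 2 + ‖Hop ψ‖ ^ 2
  /-- `H` is symmetric -/
  Hsymm : ∀ ψ φ : H1, ⟪j1 ψ, Hop φ⟫ = ⟪Hop ψ, j1 φ⟫
  /-- `H` is self-adjoint: non-real points belong to `ρ(H)` -/
  res_nonreal : ∀ z : ℂ, z.im ≠ 0 → z ∈ res
  /-- `H` is bounded from below by `lamInf` -/
  res_below : ∀ x : ℝ, x < lamInf → (x : ℂ) ∈ res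
  /-- `lamInf` is exactly `inf σ(H)` -/
  lamInf_not_res : (lamInf : ℂ) ∉ res
  RF_inv_left : ∀ z ∈ res, (RF z).comp (z • j1 - Hop) = ContinuousLinearMap.id ℂ H1
  RF_inv_right : ∀ z ∈ res, (z • j1 - Hop).comp (RF z) = ContinuousLinearMap.id ℂ F
  /-- `H̄` extends `H` -/
  Hbar_ext : Hbar.comp j1 = jm.comp Hop
  /-- `RM z` extends `RF z` -/
  RM_ext : ∀ z ∈ res, (RM z).comp jm = j1.comp (RF z)
  RM_inv_left : ∀ z ∈ res, (RM z).comp (z • jm - Hbar) = ContinuousLinearMap.id ℂ F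
  RM_inv_right : ∀ z ∈ res, (z • jm - Hbar).comp (RM z) = ContinuousLinearMap.id ℂ Hm1
  pair_add : ∀ x y φ, pair (x + y) φ = pair x φ + pair y φ
  pair_smul : ∀ (a : ℂ) x φ, pair (a • x) φ = starRingEnd ℂ a * pair x φ
  pair_addr : ∀ x φ₁ φ₂, pair x (φ₁ + φ₂) = pair x φ₁ + pair x φ₂
  pair_smulr : ∀ (a : ℂ) x φ, pair x (a • φ) = a * pair x φ
  pair_cont : ∀ φ, Continuous fun x => pair x φ
  /-- the pairing extends the scalar product of `𝔉` -/
  pair_jm : ∀ (ψ : F) (φ : H1), pair (jm ψ) φ = ⟪ψ, j1 φ⟫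
  pair_nondeg : ∀ x, (∀ φ, pair x φ = 0) → x = 0
  ns_zero : ∀ ψ, ns 0 ψ = ‖j1 ψ‖
  ns_one : ∀ ψ, ns 1 ψ = ‖ψ‖
  ns_nonneg : ∀ s ψ, 0 ≤ ns s ψ
  ns_mono : ∀ s t : ℝ, 0 ≤ s → s ≤ t → t ≤ 1 → ∀ ψ, ns s ψ ≤ ns t ψ
  /-- interpolation property of the scale of Hilbert spaces -/
  ns_interp : ∀ s : ℝ, 0 ≤ s → s ≤ 1 → ∀ ψ, ns s ψ ≤ ‖ψ‖ ^ s * ‖j1 ψ‖ ^ (1 - s)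
  /-- `Astar` is the dual-pairing adjoint of `A` -/
  Astar_spec : ∀ (ψ : F) (φ : H1), pair (Astar ψ) φ = ⟪ψ, A φ⟫

variable {F H1 Hm1 : Type*}
  [NormedAddCommGroup F] [InnerProductSpace ℂ F] [CompleteSpace F]
  [NormedAddCommGroup H1] [InnerProductSpace ℂ H1] [CompleteSpace H1]
  [NormedAddCommGroup Hm1] [InnerProductSpace ℂ Hm1] [CompleteSpace Hm1]

namespace Ctx

variable (c : Ctx F H1 Hm1)

/-- `G_z := (A R_{z̄})* ∈ 𝔅(𝔉)`. -/
def G (z : ℂ) : F →L[ℂ] F :=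
  ContinuousLinearMap.adjoint (c.A.comp (c.RF (starRingEnd ℂ z)))

/-- `G_z* ∈ 𝔅(𝔉)`, for `z` real this is `G*`. -/
def Gst (lam : ℝ) : F →L[ℂ] F :=
  ContinuousLinearMap.adjoint (c.G (lam : ℂ))

/-- `𝔸 : 𝔥₁ → 𝔉⊕𝔥₁`, `𝔸ψ = Aψ ⊕ ψ`. -/
def Ab : H1 →L[ℂ] (F × H1) :=
  c.A.prod (ContinuousLinearMap.id ℂ H1)

/-- `𝔾_z : 𝔉⊕𝔥₋₁ → 𝔉`, `𝔾_z(ψ⊕φ) = G_zψ + R_zφ`. -/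
def Gb (z : ℂ) : (F × Hm1) →L[ℂ] F :=
  (c.G z).comp (ContinuousLinearMap.fst ℂ F Hm1) +
    (c.RM z).comp (ContinuousLinearMap.snd ℂ F Hm1)

/-- `𝔾_{z̄}* : 𝔉 → 𝔉⊕𝔥₁`, `ψ ↦ (A R_z ψ) ⊕ (R_z ψ)`. -/
def Gbstar (z : ℂ) : F →L[ℂ] (F × H1) :=
  (c.A.comp (c.RF z)).prod (c.RF z)

/-- `M_z = 𝔸(𝔾 - 𝔾_z) = (z-λ∘) 𝔾* 𝔾_z : 𝔉⊕𝔥₋₁ → 𝔉⊕𝔥₁`. -/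
def M (lam : ℝ) (z : ℂ) : (F × Hm1) →L[ℂ] (F × H1) :=
  (z - (lam : ℂ)) • ((c.Gbstar (lam : ℂ)).comp (c.Gb z))

/-- `M' : 𝔉⊕𝔥₋₁ → 𝔉⊕𝔥₁` is a realization of `M_z := 𝔸(𝔾 - 𝔾_z)`, i.e. the second
component of `M' x` is the lift to `𝔥₁` of `(𝔾 - 𝔾_z)x` and the first component is `A`
applied to it. -/
def IsMLift (lam : ℝ) (z : ℂ) (M' : (F × Hm1) →L[ℂ] (F × H1)) : Prop :=
  ∀ x : F × Hm1,
    c.j1 ((M' x).2) = c.Gb (lam : ℂ) x - c.Gb z x ∧ (M' x).1 = c.A ((M' x).2)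

/-- The domain `𝔇 = {ψ ∈ 𝔉 : ψ - Gψ ∈ 𝔥₁}` (with `G = G_{λ∘}`). -/
def Dom (lam : ℝ) : Set F :=
  {ψ | ∃ φ : H1, ψ - c.G (lam : ℂ) ψ = c.j1 φ}

/-- The action of the block operator matrix `Θ_S = [[T_S, 1-G*],[1-G, -R]]` on the element
`ψ ⊕ φ` of its domain `𝔇⊕𝔉`; here `ψ0 ∈ 𝔥₁` is the lift of `(1-G)ψ`, so that
`T_Sψ = (1-G*)S(1-G)ψ = (1-G*)(Sψ0)`. -/
def ThetaS (lam : ℝ) (S : H1 →ₗ[ℂ] F) (ψ : F) (ψ0 : H1) (φ : F) : F × H1 :=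
  (S ψ0 - c.Gst lam (S ψ0) + φ - c.Gst lam φ, ψ0 - c.RF (lam : ℂ) φ)

/-- The action of `Θ_S + M_z` on `ψ ⊕ φ ∈ 𝔇⊕𝔉`. -/
def ThetaMS (lam : ℝ) (S : H1 →ₗ[ℂ] F) (z : ℂ) (ψ : F) (ψ0 : H1) (φ : F) : F × H1 :=
  c.ThetaS lam S ψ ψ0 φ + c.M lam z (ψ, c.jm φ)

/-- `Λ ∈ 𝔅(𝔉⊕𝔥₁, 𝔉⊕𝔥₋₁)` is the (two-sided) inverse of `Θ_S + M_z`. -/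
def IsInvTheta (lam : ℝ) (S : H1 →ₗ[ℂ] F) (z : ℂ)
    (Λ : (F × H1) →L[ℂ] (F × Hm1)) : Prop :=
  (∀ (ψ : F) (ψ0 : H1) (φ : F), c.j1 ψ0 = ψ - c.G (lam : ℂ) ψ →
    Λ (c.ThetaMS lam S z ψ ψ0 φ) = (ψ, c.jm φ)) ∧
  (∀ y : F × H1, ∃ (ψ : F) (ψ0 : H1) (φ : F),
    c.j1 ψ0 = ψ - c.G (lam : ℂ) ψ ∧ Λ y = (ψ, c.jm φ) ∧ c.ThetaMS lam S z ψ ψ0 φ = y)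

/-- `Z_S := {z ∈ ρ(H) : (Θ_S + M_z)⁻¹ ∈ 𝔅(𝔉⊕𝔥₁, 𝔉⊕𝔥₋₁)}`. -/
def ZS (lam : ℝ) (S : H1 →ₗ[ℂ] F) : Set ℂ :=
  {z | z ∈ c.res ∧ ∃ Λ : (F × H1) →L[ℂ] (F × Hm1), c.IsInvTheta lam S z Λ}

/-- `R̂_z = R_z + 𝔾_z Λ 𝔾_{z̄}* : 𝔉 → 𝔉`. -/
def Rhat (z : ℂ) (Λ : (F × H1) →L[ℂ] (F × Hm1)) : F →L[ℂ] F :=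
  c.j1.comp (c.RF z) + (c.Gb z).comp (Λ.comp (c.Gbstar z))

/-- The duality pairing `⟨⟨·,·⟩⟩_{-1,1}` between `𝔉⊕𝔥₋₁` and `𝔉⊕𝔥₁`. -/
def pairX (x : F × Hm1) (y : F × H1) : ℂ :=
  ⟪x.1, y.1⟫ + c.pair x.2 y.2

/-- Assumption (H3): `ran(G_z) ∩ 𝔥₁ = {0}` for all `z ∈ ρ(H)`. -/
def H3 : Prop :=
  ∀ z ∈ c.res, ∀ (ψ : F) (φ : H1), c.G z ψ = c.j1 φ → c.G z ψ = 0

/-- `S` is a symmetric operator (with domain containing `𝔥₁`). -/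
def IsSymmOp (S : H1 →ₗ[ℂ] F) : Prop :=
  ∀ ψ φ : H1, ⟪S ψ, c.j1 φ⟫ = ⟪c.j1 ψ, S φ⟫

/-- `S` is `H`-small with constants `a`, `b`. -/
def HSmall (S : H1 →ₗ[ℂ] F) (a b : ℝ) : Prop :=
  ∀ ψ : H1, ‖S ψ‖ ≤ a * ‖c.Hop ψ‖ + b * ‖c.j1 ψ‖

/-- `HSf ψ ψ0` realizes the action of `H_S = H̄ + A* + A_S` on `ψ ∈ 𝔇` (with `ψ0` the lift
of `(1-G)ψ`): `H_Sψ ∈ 𝔉` is characterized by `H_Sψ = H̄ψ + A*ψ + Aψ0 - T_Sψ` in `𝔥₋₁`. -/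
def IsHSAction (lam : ℝ) (S : H1 →ₗ[ℂ] F) (HSf : F → H1 → F) : Prop :=
  ∀ (ψ : F) (ψ0 : H1), c.j1 ψ0 = ψ - c.G (lam : ℂ) ψ →
    c.jm (HSf ψ ψ0) =
      c.Hbar ψ + c.Astar ψ + c.jm (c.A ψ0 - (S ψ0 - c.Gst lam (S ψ0)))

/-- `Rop = (-(H+W)+z)⁻¹`, the resolvent at `z` of the perturbation of `H` by the
`H`-bounded operator `W` (with domain `𝔥₁`). -/
def IsResolventOf (W : H1 →L[ℂ] F) (z : ℂ) (Rop : F →L[ℂ] F) : Prop :=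
  (∀ ψ : H1, Rop (z • c.j1 ψ - (c.Hop ψ + W ψ)) = c.j1 ψ) ∧
  (∀ χ : F, ∃ ψ : H1, Rop χ = c.j1 ψ ∧ z • c.j1 ψ - (c.Hop ψ + W ψ) = χ)

/-- `Rop = (-H_S+z)⁻¹`, the resolvent at `z` of the operator `H_S` with domain `𝔇` whose
action is realized by `HSf`. -/
def IsResolventOfD (lam : ℝ) (HSf : F → H1 → F) (z : ℂ) (Rop : F →L[ℂ] F) : Prop :=
  (∀ (ψ : F) (ψ0 : H1), c.j1 ψ0 = ψ - c.G (lam : ℂ) ψ →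
    Rop (z • ψ - HSf ψ ψ0) = ψ) ∧
  (∀ χ : F, ∃ (ψ : F) (ψ0 : H1),
    c.j1 ψ0 = ψ - c.G (lam : ℂ) ψ ∧ Rop χ = ψ ∧ z • ψ - HSf ψ ψ0 = χ)

/-- `ψ ∈ 𝔥_s` (for `0 ≤ s ≤ 1`), i.e. `ψ ∈ 𝔉` is the limit of a `‖·‖_s`-Cauchy sequence
of elements of `𝔥₁`. -/
def memHs (s : ℝ) (ψ : F) : Prop :=
  ∃ u : ℕ → H1, Filter.Tendsto (fun n => c.j1 (u n)) Filter.atTop (nhds ψ) ∧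
    ∀ ε > 0, ∃ N, ∀ m ≥ N, ∀ n ≥ N, c.ns s (u m - u n) < ε

/-- `T ∈ 𝔅(𝔥_s, 𝔉)` (with `T` given on `𝔥₁`): `T` is bounded for the `‖·‖_s`-norm. -/
def MemBs (s : ℝ) (T : H1 →L[ℂ] F) : Prop :=
  ∃ C : ℝ, 0 ≤ C ∧ ∀ ψ : H1, ‖T ψ‖ ≤ C * c.ns s ψ

/-- `T` (with domain containing `𝔥₁ ⊆ 𝔥_{1/2}`) is closable as an operator in `𝔉`. -/
def ClosableOp (T : H1 →L[ℂ] F) : Prop :=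
  ∀ (u : ℕ → H1) (χ : F),
    Filter.Tendsto (fun n => c.j1 (u n)) Filter.atTop (nhds 0) →
    Filter.Tendsto (fun n => T (u n)) Filter.atTop (nhds χ) → χ = 0

/-- `Tstar` is (the restriction to `𝔥₁` of) the adjoint of `T`. -/
def IsAdjointOn (T Tstar : H1 →L[ℂ] F) : Prop :=
  ∀ ψ φ : H1, ⟪Tstar ψ, c.j1 φ⟫ = ⟪c.j1 ψ, T φ⟫

/-- `G_{n,z} := (A_n R_{z̄})* ∈ 𝔅(𝔉)`. -/
def Gn (An : H1 →L[ℂ] F) (z : ℂ) : F →L[ℂ] F :=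
  ContinuousLinearMap.adjoint (An.comp (c.RF (starRingEnd ℂ z)))

/-- `B = A_n R A_n* ∈ 𝔅(𝔉)`: since `R A_n*ψ = G_{n,λ∘}ψ ∈ 𝔥₁`, the operator `B` is
`A_n` applied to the lift of `G_{n,λ∘}ψ`. -/
def IsAnRAn (lam : ℝ) (An : H1 →L[ℂ] F) (B : F →L[ℂ] F) : Prop :=
  ∀ ψ : F, ∃ φ : H1, c.j1 φ = c.Gn An (lam : ℂ) ψ ∧ B ψ = An φ

/-- `𝔾_{n,z}` as a bounded operator `𝔉⊕𝔉 → 𝔉`, `ψ⊕φ ↦ G_{n,z}ψ + R_zφ`. -/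
def Gnb (An : H1 →L[ℂ] F) (z : ℂ) : (F × F) →L[ℂ] F :=
  (c.Gn An z).comp (ContinuousLinearMap.fst ℂ F F) +
    (c.j1.comp (c.RF z)).comp (ContinuousLinearMap.snd ℂ F F)

/-- `𝔾_{n,z̄}* : 𝔉 → 𝔉⊕𝔉`, `ψ ↦ (A_n R_z ψ) ⊕ (R_z ψ)`. -/
def Gnbstar (An : H1 →L[ℂ] F) (z : ℂ) : F →L[ℂ] (F × F) :=
  (An.comp (c.RF z)).prod (c.j1.comp (c.RF z))

/-- `M_{n,z} = 𝔸_n(𝔾_n - 𝔾_{n,z}) = (z-λ∘)𝔾_n*𝔾_{n,z} : 𝔉⊕𝔉 → 𝔉⊕𝔥₁ ⊆ 𝔉⊕𝔉`. -/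
def Mn (lam : ℝ) (An : H1 →L[ℂ] F) (z : ℂ) : (F × F) →L[ℂ] (F × F) :=
  (z - (lam : ℂ)) • ((c.Gnbstar An (lam : ℂ)).comp (c.Gnb An z))

/-- `Θ_n = [[E_n - A_nRA_n*, 1-G_n*],[1-G_n, -R]] : 𝔉⊕𝔉 → 𝔉⊕𝔉`. -/
def Thetan (lam : ℝ) (An : H1 →L[ℂ] F) (En AnRAn : F →L[ℂ] F) :
    (F × F) →L[ℂ] (F × F) :=
  ((En - AnRAn).comp (ContinuousLinearMap.fst ℂ F F) +
      ((1 : F →L[ℂ] F) - An.comp (c.RF (lam : ℂ))).comp (ContinuousLinearMap.snd ℂ F F)).prod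
    (((1 : F →L[ℂ] F) - c.Gn An (lam : ℂ)).comp (ContinuousLinearMap.fst ℂ F F) -
      (c.j1.comp (c.RF (lam : ℂ))).comp (ContinuousLinearMap.snd ℂ F F))

end Ctx

/-!
For `φ = R_{iγ} ψ` the symmetry of `H` makes `⟪φ, Hφ⟫` real, so
`‖ψ‖² = ‖(iγ - H)φ‖² = γ²‖φ‖² + ‖Hφ‖²`. Hence `‖φ‖ ≤ ‖ψ‖ / |γ|` and `‖φ‖₁ ≤ ‖ψ‖` once `|γ| ≥ 1`,
and interpolating between `𝔉` and `𝔥₁` gives `‖φ‖_s ≤ |γ|^(s-1) ‖ψ‖`. Consequently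
`‖G_{iγ}‖ = ‖A R_{-iγ}‖ ≤ ‖A‖_{𝔅(𝔥_s,𝔉)} |γ|^(s-1)`, which is `< 1` for the stated `γ`, and
`1 - G_{iγ}`, `1 - G_{iγ}*` are inverted by Neumann series.
-/

namespace Ctx

variable (c : Ctx F H1 Hm1)

theorem apply_RF {z : ℂ} (hz : z ∈ c.res) (ψ : F) :
    z • c.j1 (c.RF z ψ) - c.Hop (c.RF z ψ) = ψ := by
  simpa using congrArg (· ψ) (c.RF_inv_right z hz)

theorem ofReal_mul_I_mem_res {γ : ℝ} (hγ : γ ≠ 0) : (γ : ℂ) * Complex.I ∈ c.res :=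
  c.res_nonreal _ (by simpa using hγ)

theorem inner_j1_Hop_im_eq_zero (φ : H1) : (⟪c.j1 φ, c.Hop φ⟫).im = 0 :=
  Complex.conj_eq_iff_im.mp (by rw [inner_conj_symm]; exact (c.Hsymm φ φ).symm)

theorem norm_I_smul_sub_Hop_sq (γ : ℝ) (φ : H1) :
    ‖((γ : ℂ) * Complex.I) • c.j1 φ - c.Hop φ‖ ^ 2 = γ ^ 2 * ‖c.j1 φ‖ ^ 2 + ‖c.Hop φ‖ ^ 2 := by
  have hre : RCLike.re ⟪((γ : ℂ) * Complex.I) • c.j1 φ, c.Hop φ⟫ = 0 := by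
    simp [Complex.mul_re, c.inner_j1_Hop_im_eq_zero φ]
  rw [norm_sub_sq (𝕜 := ℂ), hre, norm_smul, mul_pow]
  simp

theorem norm_RF_I_sq {γ : ℝ} (hγ : γ ≠ 0) (ψ : F) :
    ‖ψ‖ ^ 2 = γ ^ 2 * ‖c.j1 (c.RF ((γ : ℂ) * Complex.I) ψ)‖ ^ 2
      + ‖c.Hop (c.RF ((γ : ℂ) * Complex.I) ψ)‖ ^ 2 := by
  conv_lhs => rw [← c.apply_RF (c.ofReal_mul_I_mem_res hγ) ψ]
  exact c.norm_I_smul_sub_Hop_sq γ _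

theorem abs_mul_norm_j1_RF_I_le {γ : ℝ} (hγ : γ ≠ 0) (ψ : F) :
    |γ| * ‖c.j1 (c.RF ((γ : ℂ) * Complex.I) ψ)‖ ≤ ‖ψ‖ := by
  refine abs_le_of_sq_le_sq' ?_ (norm_nonneg ψ) |>.2
  rw [mul_pow, sq_abs, c.norm_RF_I_sq hγ ψ]
  exact le_add_of_nonneg_right (sq_nonneg _)

theorem norm_RF_I_le {γ : ℝ} (hγ : 1 ≤ |γ|) (ψ : F) :
    ‖c.RF ((γ : ℂ) * Complex.I) ψ‖ ≤ ‖ψ‖ := by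
  have hγ0 : γ ≠ 0 := abs_pos.mp (one_pos.trans_le hγ)
  refine abs_le_of_sq_le_sq' ?_ (norm_nonneg ψ) |>.2
  rw [c.norm1_sq, c.norm_RF_I_sq hγ0 ψ]
  gcongr
  exact le_mul_of_one_le_left (sq_nonneg _) ((one_le_sq_iff_one_le_abs γ).mpr hγ)

theorem ns_le_of_norm_le {s t M : ℝ} (hs0 : 0 ≤ s) (hs1 : s ≤ 1) (ht : 0 < t) {φ : H1}
    (h1 : ‖φ‖ ≤ M) (h0 : t * ‖c.j1 φ‖ ≤ M) : c.ns s φ ≤ t ^ (s - 1) * M := by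
  have hM : 0 ≤ M := (norm_nonneg φ).trans h1
  calc c.ns s φ ≤ ‖φ‖ ^ s * ‖c.j1 φ‖ ^ (1 - s) := c.ns_interp s hs0 hs1 φ
    _ ≤ M ^ s * (M / t) ^ (1 - s) := by
      gcongr
      rwa [le_div_iff₀ ht, mul_comm]
    _ = t ^ (s - 1) * M := by
      rw [Real.div_rpow hM ht.le, mul_div_assoc', div_eq_mul_inv,
        ← Real.rpow_add' hM (by norm_num), ← Real.rpow_neg ht.le]
      simp [mul_comm]

theorem ns_RF_I_le {γ : ℝ} (hγ : 1 ≤ |γ|) {s : ℝ} (hs : s ∈ Set.Icc (0 : ℝ) 1) (ψ : F) :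
    c.ns s (c.RF ((γ : ℂ) * Complex.I) ψ) ≤ |γ| ^ (s - 1) * ‖ψ‖ :=
  c.ns_le_of_norm_le hs.1 hs.2 (one_pos.trans_le hγ) (c.norm_RF_I_le hγ ψ)
    (c.abs_mul_norm_j1_RF_I_le (abs_pos.mp (one_pos.trans_le hγ)) ψ)

theorem norm_G_I_le {s CA : ℝ} (hs : s ∈ Set.Icc (0 : ℝ) 1) (hCA : 0 ≤ CA)
    (hA : ∀ ψ : H1, ‖c.A ψ‖ ≤ CA * c.ns s ψ) {γ : ℝ} (hγ : 1 ≤ |γ|) :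
    ‖c.G ((γ : ℂ) * Complex.I)‖ ≤ CA * |γ| ^ (s - 1) := by
  have hconj : starRingEnd ℂ ((γ : ℂ) * Complex.I) = ((-γ : ℝ) : ℂ) * Complex.I := by simp
  rw [G, ContinuousLinearMap.adjoint.norm_map, hconj]
  refine ContinuousLinearMap.opNorm_le_bound _ (by positivity) fun ψ => ?_
  calc ‖c.A (c.RF (((-γ : ℝ) : ℂ) * Complex.I) ψ)‖
      ≤ CA * c.ns s (c.RF (((-γ : ℝ) : ℂ) * Complex.I) ψ) := hA _
    _ ≤ CA * (|-γ| ^ (s - 1) * ‖ψ‖) := by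
      gcongr
      exact c.ns_RF_I_le (by rwa [abs_neg]) hs ψ
    _ = CA * |γ| ^ (s - 1) * ‖ψ‖ := by rw [abs_neg, mul_assoc]

end Ctx

theorem mul_rpow_sub_one_lt_one {s a x : ℝ} (hs : s < 1) (ha : 0 ≤ a)
    (h : a ^ (1 / (1 - s)) < x) : a * x ^ (s - 1) < 1 := by
  have h1s : 0 < 1 - s := sub_pos.mpr hs
  have hx : 0 < x := (Real.rpow_nonneg ha _).trans_lt h
  have hax : a < x ^ (1 - s) := by
    simpa [← Real.rpow_mul ha, h1s.ne'] using Real.rpow_lt_rpow (Real.rpow_nonneg ha _) h h1s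
  rw [show s - 1 = -(1 - s) by ring, Real.rpow_neg hx.le, ← div_eq_mul_inv]
  exact (div_lt_one (Real.rpow_pos_of_pos hx _)).mpr hax

/-- For every `γ ∈ ℝ` with `|γ| ≥ 1` and every `s ∈ [0,1]` one has
`‖R_{iγ}‖_{𝔅(𝔉,𝔥_s)} ≤ |γ|^(s-1)`; consequently, if `A ∈ 𝔅(𝔥_s,𝔉)` for some `s ∈ (0,1)`,
then both `1-G_{iγ}` and `1-G_{iγ}*` have bounded inverses in `𝔅(𝔉)` whenever
`|γ| > max{1, ‖A‖_{𝔅(𝔥_s,𝔉)}^(1/(1-s))}`. -/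
theorem statement4 (c : Ctx F H1 Hm1) :
    (∀ γ : ℝ, 1 ≤ |γ| → ∀ s ∈ Set.Icc (0 : ℝ) 1, ∀ ψ : F,
      c.ns s (c.RF ((γ : ℂ) * Complex.I) ψ) ≤ |γ| ^ (s - 1) * ‖ψ‖) ∧
    (∀ s ∈ Set.Ioo (0 : ℝ) 1, ∀ CA : ℝ, 0 ≤ CA →
      (∀ ψ : H1, ‖c.A ψ‖ ≤ CA * c.ns s ψ) →
      ∀ γ : ℝ, max 1 (CA ^ (1 / (1 - s))) < |γ| →
        IsUnit ((1 : F →L[ℂ] F) - c.G ((γ : ℂ) * Complex.I)) ∧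
        IsUnit ((1 : F →L[ℂ] F) -
          ContinuousLinearMap.adjoint (c.G ((γ : ℂ) * Complex.I)))) := by
  refine ⟨fun γ hγ s hs ψ => c.ns_RF_I_le hγ hs ψ, fun s hs CA hCA hA γ hγ => ?_⟩
  have hG : ‖c.G ((γ : ℂ) * Complex.I)‖ < 1 :=
    (c.norm_G_I_le (Set.Ioo_subset_Icc_self hs) hCA hA ((le_max_left _ _).trans hγ.le)).trans_lt
      (mul_rpow_sub_one_lt_one hs.2 hCA ((le_max_right _ _).trans_lt hγ))
  refine ⟨isUnit_one_sub_of_norm_lt_one hG, isUnit_one_sub_of_norm_lt_one ?_⟩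
  rwa [ContinuousLinearMap.adjoint.norm_map]
end
end

section
/- Let H : 𝔥₁ ⊆ 𝔉 → 𝔉 be self-adjoint and bounded from below, let A ∈ 𝔅(𝔥₁,𝔉) satisfy assumption (H3), and suppose λ∘ ∈ Z_S. Then the family of bounded operators R̂_z := R_z + 𝔾_z (Θ_S + M_z)^{-1} 𝔾_{z̄}*, for z ∈ Z_S, is the resolvent of a (densely defined) self-adjoint operator in 𝔉. -/
open scoped InnerProductSpace ComplexConjugate

noncomputable section

local notation "⟪" x ", " y "⟫" => @inner ℂ _ _ x y

variable {F H1 Hm1 : Type*}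
  [NormedAddCommGroup F] [InnerProductSpace ℂ F] [CompleteSpace F]
  [NormedAddCommGroup H1] [InnerProductSpace ℂ H1] [CompleteSpace H1]
  [NormedAddCommGroup Hm1] [InnerProductSpace ℂ Hm1] [CompleteSpace Hm1]

/-!
At `λ∘` the correction `M` vanishes, so `B := R̂_{λ∘} = R + 𝔾 Θ_S⁻¹ 𝔾*`. Writing
`Θ_S(ψ ⊕ φ) = 𝔾*χ`, one gets `Bχ = Rχ + Gψ + Rφ`, and the symmetry of `S` and `R` makes `B`
symmetric. If `Bχ = 0` then `Gψ = -R(χ + φ) ∈ 𝔥₁`, so `Gψ = 0` by (H3), whence `φ = -χ`,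
`(1 - G)ψ = 0` and finally `χ = 0`: `B` is injective. A symmetric injective `B` has dense range,
and `T := λ∘ - B⁻¹` on `ran B` is self-adjoint. The family `R̂_z` satisfies the resolvent
identity `R̂_w - R̂_z = (z - w) R̂_w R̂_z`, inherited from those of `R_z`, `G_z` and
`(Θ_S + M_z)⁻¹` via `M_z - M_w = (z - w) 𝔾_{w̄}* 𝔾_z`; this identifies `R̂_z` with `(z - T)⁻¹`.
-/

section SymmetricResolvent

variable {𝕜 E : Type*} [RCLike 𝕜] [NormedAddCommGroup E] [InnerProductSpace 𝕜 E]
  {B : E →ₗ[𝕜] E}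

theorem LinearMap.IsSymmetric.dense_range [CompleteSpace E] (hB : B.IsSymmetric)
    (hinj : Function.Injective B) : Dense (LinearMap.range B : Set E) := by
  rw [Submodule.dense_iff_topologicalClosure_eq_top, Submodule.topologicalClosure_eq_top_iff,
    hB.orthogonal_range, LinearMap.ker_eq_bot.2 hinj]

namespace LinearPMap

def ofResolvent (B : E →ₗ[𝕜] E) (hinj : Function.Injective B) (lam : 𝕜) : E →ₗ.[𝕜] E where
  domain := LinearMap.range B
  toFun := lam • (LinearMap.range B).subtype - (LinearEquiv.ofInjective B hinj).symm.toLinearMap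

variable {hinj : Function.Injective B} {lam : 𝕜}

theorem mem_ofResolvent_domain (χ : E) : B χ ∈ (ofResolvent B hinj lam).domain :=
  LinearMap.mem_range_self B χ

theorem ofResolvent_apply {x : (ofResolvent B hinj lam).domain} {χ : E} (hx : B χ = x) :
    ofResolvent B hinj lam x = lam • (x : E) - χ := by
  have hχ : (LinearEquiv.ofInjective B hinj).symm x = χ :=
    (LinearEquiv.symm_apply_eq _).2 (Subtype.ext hx.symm)
  change lam • (x : E) - (LinearEquiv.ofInjective B hinj).symm x = _
  rw [hχ]

theorem ofResolvent_resolvent_of_identity {R : E →ₗ[𝕜] E} {z : 𝕜}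
    (hRB : ∀ χ, R χ - B χ = (lam - z) • R (B χ))
    (hBR : ∀ χ, B χ - R χ = (z - lam) • B (R χ)) :
    (∀ x : (ofResolvent B hinj lam).domain, R (z • (x : E) - ofResolvent B hinj lam x) = x) ∧
    ∀ χ, ∃ x : (ofResolvent B hinj lam).domain,
      R χ = x ∧ z • (x : E) - ofResolvent B hinj lam x = χ := by
  constructor
  · intro x
    obtain ⟨χ, hχ⟩ := x.2
    have harg : z • B χ - (lam • B χ - χ) = χ - (lam - z) • B χ := by module
    rw [ofResolvent_apply hχ, ← hχ, harg, LinearMap.map_sub, LinearMap.map_smul]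
    linear_combination (norm := module) hRB χ
  · intro χ
    have hmem : B (χ - (z - lam) • R χ) = R χ := by
      rw [LinearMap.map_sub, LinearMap.map_smul]
      linear_combination (norm := module) hBR χ
    refine ⟨⟨_, mem_ofResolvent_domain (χ - (z - lam) • R χ)⟩, hmem.symm, ?_⟩
    rw [ofResolvent_apply rfl]
    dsimp only
    rw [hmem]
    module

theorem isSelfAdjoint_ofResolvent [CompleteSpace E] (hB : B.IsSymmetric)
    (hinj : Function.Injective B) (lam : ℝ) : IsSelfAdjoint (ofResolvent B hinj lam) := by
  set T := ofResolvent B hinj lam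
  have hdense : Dense (T.domain : Set E) := hB.dense_range hinj
  have hT : T.IsFormalAdjoint T := by
    rintro ⟨_, χ, rfl⟩ ⟨_, χ', rfl⟩
    rw [ofResolvent_apply rfl, ofResolvent_apply rfl]
    simp only [inner_sub_left, inner_sub_right, inner_smul_left, inner_smul_right,
      RCLike.conj_ofReal, hB χ χ']
  have hadj : ∀ y : T†.domain, B ((lam : 𝕜) • (y : E) - T† y) = y := by
    intro y
    refine ext_inner_right 𝕜 fun χ => ?_
    have h := adjoint_isFormalAdjoint hdense y ⟨B χ, mem_ofResolvent_domain χ⟩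
    rw [ofResolvent_apply rfl] at h
    simp only [hB _ χ, inner_sub_left, inner_sub_right, inner_smul_left, inner_smul_right,
      RCLike.conj_ofReal, h]
    ring
  have hle : T† ≤ T := ⟨fun y hy => ⟨_, hadj ⟨y, hy⟩⟩, fun x y hxy => by
    rw [ofResolvent_apply (by rw [hadj x]; exact hxy), ← hxy, sub_sub_cancel]⟩
  exact le_antisymm hle (hT.le_adjoint hdense)

end LinearPMap

end SymmetricResolvent

namespace Ctx

variable (c : Ctx F H1 Hm1) {z w : ℂ}

lemma conj_mem_res (hz : z ∈ c.res) : conj z ∈ c.res := by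
  by_cases h : z.im = 0
  · rwa [Complex.conj_eq_iff_im.mpr h]
  · exact c.res_nonreal _ (by simpa using h)

lemma RF_sub_Hop (hz : z ∈ c.res) (ψ : H1) : c.RF z (z • c.j1 ψ - c.Hop ψ) = ψ :=
  congr($(c.RF_inv_left z hz) ψ)

lemma sub_Hop_RF (hz : z ∈ c.res) (χ : F) : z • c.j1 (c.RF z χ) - c.Hop (c.RF z χ) = χ :=
  congr($(c.RF_inv_right z hz) χ)

lemma RM_sub_Hbar (hz : z ∈ c.res) (u : F) : c.RM z (z • c.jm u - c.Hbar u) = u :=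
  congr($(c.RM_inv_left z hz) u)

lemma sub_Hbar_RM (hz : z ∈ c.res) (x : Hm1) : z • c.jm (c.RM z x) - c.Hbar (c.RM z x) = x :=
  congr($(c.RM_inv_right z hz) x)

lemma RM_jm (hz : z ∈ c.res) (u : F) : c.RM z (c.jm u) = c.j1 (c.RF z u) :=
  congr($(c.RM_ext z hz) u)

lemma RF_injective (hz : z ∈ c.res) : Function.Injective (c.RF z) := fun χ χ' h => by
  rw [← c.sub_Hop_RF hz χ, h, c.sub_Hop_RF hz χ']

lemma RF_sub_RF (hz : z ∈ c.res) (hw : w ∈ c.res) (χ : F) :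
    c.RF z χ - c.RF w χ = (w - z) • c.RF w (c.j1 (c.RF z χ)) := by
  have h : χ = (w • c.j1 (c.RF z χ) - c.Hop (c.RF z χ)) + (z - w) • c.j1 (c.RF z χ) := by
    conv_lhs => rw [← c.sub_Hop_RF hz χ]
    module
  have hw' := congrArg (c.RF w) h
  rw [map_add, c.RF_sub_Hop hw, map_smul] at hw'
  rw [hw']
  module

lemma RM_sub_RM (hz : z ∈ c.res) (hw : w ∈ c.res) (x : Hm1) :
    c.RM z x - c.RM w x = (w - z) • c.j1 (c.RF z (c.RM w x)) := by
  have h : x = (z • c.jm (c.RM w x) - c.Hbar (c.RM w x)) + (w - z) • c.jm (c.RM w x) := by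
    conv_lhs => rw [← c.sub_Hbar_RM hw x]
    module
  have hz' := congrArg (c.RM z) h
  rw [map_add, c.RM_sub_Hbar hz, map_smul, c.RM_jm hz] at hz'
  rw [hz']
  module

lemma inner_RF_conj (hz : z ∈ c.res) (χ χ' : F) :
    ⟪c.j1 (c.RF (conj z) χ), χ'⟫ = ⟪χ, c.j1 (c.RF z χ')⟫ := by
  conv_lhs => rw [← c.sub_Hop_RF hz χ']
  conv_rhs => rw [← c.sub_Hop_RF (c.conj_mem_res hz) χ]
  rw [inner_sub_right, inner_smul_right, c.Hsymm, inner_sub_left, inner_smul_left,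
    Complex.conj_conj]

lemma inner_RF_real {lam : ℝ} (hl : (lam : ℂ) ∈ c.res) (χ χ' : F) :
    ⟪c.j1 (c.RF lam χ), χ'⟫ = ⟪χ, c.j1 (c.RF lam χ')⟫ := by
  simpa using c.inner_RF_conj hl χ χ'

lemma inner_G_left (z : ℂ) (ψ χ : F) : ⟪c.G z ψ, χ⟫ = ⟪ψ, c.A (c.RF (conj z) χ)⟫ :=
  ContinuousLinearMap.adjoint_inner_left _ _ _

lemma Gst_apply (lam : ℝ) (χ : F) : c.Gst lam χ = c.A (c.RF lam χ) := by
  rw [Gst, G, ContinuousLinearMap.adjoint_adjoint, Complex.conj_ofReal]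
  rfl

lemma G_sub_G (hz : z ∈ c.res) (hw : w ∈ c.res) (ψ : F) :
    c.G z ψ - c.G w ψ = (w - z) • c.j1 (c.RF z (c.G w ψ)) := by
  refine ext_inner_right ℂ fun χ => ?_
  rw [inner_sub_left, c.inner_G_left, c.inner_G_left, ← inner_sub_right, ← map_sub,
    c.RF_sub_RF (c.conj_mem_res hz) (c.conj_mem_res hw), map_smul, inner_smul_right,
    ← c.inner_G_left, ← c.inner_RF_conj (c.conj_mem_res hz), Complex.conj_conj, inner_smul_left,
    map_sub]

lemma Gb_apply (z : ℂ) (x : F × Hm1) : c.Gb z x = c.G z x.1 + c.RM z x.2 := rfl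

lemma Gb_sub_Gb (hz : z ∈ c.res) (hw : w ∈ c.res) (x : F × Hm1) :
    c.Gb z x - c.Gb w x = (w - z) • c.j1 (c.RF z (c.Gb w x)) := by
  rw [c.Gb_apply z, c.Gb_apply w, add_sub_add_comm, c.G_sub_G hz hw, c.RM_sub_RM hz hw,
    ← smul_add, ← map_add, ← map_add]

lemma Gbstar_apply (z : ℂ) (χ : F) : c.Gbstar z χ = (c.A (c.RF z χ), c.RF z χ) := rfl

lemma Gbstar_sub_Gbstar (hz : z ∈ c.res) (hw : w ∈ c.res) (χ : F) :
    c.Gbstar z χ - c.Gbstar w χ = (w - z) • c.Gbstar w (c.j1 (c.RF z χ)) := by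
  simp only [Gbstar_apply, Prod.mk_sub_mk, Prod.smul_mk, ← map_sub, c.RF_sub_RF hz hw, map_smul]

lemma M_apply (lam : ℝ) (z : ℂ) (x : F × Hm1) :
    c.M lam z x = (z - lam) • c.Gbstar lam (c.Gb z x) := rfl

lemma M_self (lam : ℝ) (x : F × Hm1) : c.M lam lam x = 0 := by
  rw [M_apply, sub_self, zero_smul]

lemma M_sub_M {lam : ℝ} (hz : z ∈ c.res) (hw : w ∈ c.res) (hl : (lam : ℂ) ∈ c.res)
    (x : F × Hm1) : c.M lam z x - c.M lam w x = (z - w) • c.Gbstar w (c.Gb z x) := by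
  have hGb : c.Gb w x = c.Gb z x + (z - w) • c.j1 (c.RF w (c.Gb z x)) := by
    rw [← c.Gb_sub_Gb hw hz]; abel
  have hGbstar : c.Gbstar w (c.Gb z x) = c.Gbstar lam (c.Gb z x)
      + (lam - w) • c.Gbstar lam (c.j1 (c.RF w (c.Gb z x))) := by
    rw [← c.Gbstar_sub_Gbstar hw hl]; abel
  rw [M_apply, M_apply, hGb, map_add, map_smul, hGbstar]
  module

variable {lam : ℝ} {S : H1 →ₗ[ℂ] F} {Λz Λw : (F × H1) →L[ℂ] (F × Hm1)}

lemma IsInvTheta.apply_sub_apply {c : Ctx F H1 Hm1} (hz : c.IsInvTheta lam S z Λz)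
    (hw : c.IsInvTheta lam S w Λw) (y : F × H1) :
    Λz y - Λw y = Λw (c.M lam w (Λz y) - c.M lam z (Λz y)) := by
  obtain ⟨ψ, ψ0, φ, hψ0, hΛ, hy⟩ := hz.2 y
  have hΘ : c.ThetaMS lam S w ψ ψ0 φ = y + (c.M lam w (Λz y) - c.M lam z (Λz y)) := by
    rw [hΛ, ← hy, ThetaMS, ThetaMS]
    abel
  have h := hw.1 ψ ψ0 φ hψ0
  rw [hΘ, map_add, ← hΛ] at h
  exact sub_eq_of_eq_add' h.symm

lemma Rhat_apply (z : ℂ) (Λ : (F × H1) →L[ℂ] (F × Hm1)) (χ : F) :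
    c.Rhat z Λ χ = c.j1 (c.RF z χ) + c.Gb z (Λ (c.Gbstar z χ)) := rfl

lemma Rhat_sub_Rhat (hz : z ∈ c.res) (hw : w ∈ c.res) (hl : (lam : ℂ) ∈ c.res)
    (hΛz : c.IsInvTheta lam S z Λz) (hΛw : c.IsInvTheta lam S w Λw) (χ : F) :
    c.Rhat w Λw χ - c.Rhat z Λz χ = (z - w) • c.Rhat w Λw (c.Rhat z Λz χ) := by
  set u := Λz (c.Gbstar z χ)
  have hRF : (z - w) • c.j1 (c.RF w (c.j1 (c.RF z χ))) = c.j1 (c.RF w χ) - c.j1 (c.RF z χ) := by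
    have h := congrArg c.j1 (c.RF_sub_RF hz hw χ)
    rw [map_sub, map_smul] at h
    linear_combination (norm := module) h
  have hGb : (z - w) • c.j1 (c.RF w (c.Gb z u)) = c.Gb w u - c.Gb z u :=
    (c.Gb_sub_Gb hw hz u).symm
  have hGbstar : (z - w) • c.Gbstar w (c.j1 (c.RF z χ)) = c.Gbstar w χ - c.Gbstar z χ := by
    linear_combination (norm := module) c.Gbstar_sub_Gbstar hz hw χ
  have hM : (z - w) • Λw (c.Gbstar w (c.Gb z u)) = Λw (c.Gbstar z χ) - u := by
    have h := hΛz.apply_sub_apply hΛw (c.Gbstar z χ)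
    rw [map_sub] at h
    rw [← map_smul, ← c.M_sub_M hz hw hl, map_sub]
    linear_combination (norm := module) h
  have hexpand : (z - w) • c.Rhat w Λw (c.Rhat z Λz χ)
      = (z - w) • c.j1 (c.RF w (c.j1 (c.RF z χ))) + (z - w) • c.j1 (c.RF w (c.Gb z u))
        + c.Gb w (Λw ((z - w) • c.Gbstar w (c.j1 (c.RF z χ))))
        + c.Gb w ((z - w) • Λw (c.Gbstar w (c.Gb z u))) := by
    simp only [Rhat_apply, map_add, map_smul, smul_add, u]
    abel
  rw [hexpand, hRF, hGb, hGbstar, hM, Rhat_apply, Rhat_apply]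
  simp only [map_sub, u]
  abel

variable {Λ₀ : (F × H1) →L[ℂ] (F × Hm1)}

lemma exists_Rhat_lam_eq (hl : (lam : ℂ) ∈ c.res) (h₀ : c.IsInvTheta lam S lam Λ₀) (χ : F) :
    ∃ (ψ : F) (ψ0 : H1) (φ : F), c.j1 ψ0 = ψ - c.G lam ψ ∧
      S ψ0 - c.A (c.RF lam (S ψ0)) + φ - c.A (c.RF lam φ) = c.A (c.RF lam χ) ∧
      ψ0 - c.RF lam φ = c.RF lam χ ∧
      c.Rhat lam Λ₀ χ = c.j1 (c.RF lam χ) + c.G lam ψ + c.j1 (c.RF lam φ) := by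
  obtain ⟨ψ, ψ0, φ, hψ0, hΛ, hΘ⟩ := h₀.2 (c.Gbstar lam χ)
  rw [ThetaMS, M_self, add_zero, ThetaS, Gbstar_apply, Gst_apply, Gst_apply,
    Prod.mk.injEq] at hΘ
  refine ⟨ψ, ψ0, φ, hψ0, hΘ.1, hΘ.2, ?_⟩
  rw [Rhat_apply, hΛ, Gb_apply, c.RM_jm hl, add_assoc]

lemma Rhat_lam_injective (hl : (lam : ℂ) ∈ c.res) (hH3 : c.H3)
    (h₀ : c.IsInvTheta lam S lam Λ₀) : Function.Injective (c.Rhat lam Λ₀) := by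
  refine (injective_iff_map_eq_zero _).2 fun χ hχ => ?_
  obtain ⟨ψ, ψ0, φ, -, hA, hR, hRhat⟩ := c.exists_Rhat_lam_eq hl h₀ χ
  rw [hχ] at hRhat
  have hGψ : c.G lam ψ = c.j1 (-(c.RF lam χ + c.RF lam φ)) := by
    rw [map_neg, map_add]
    linear_combination (norm := module) hRhat.symm
  have hRF : c.RF lam χ + c.RF lam φ = 0 := by
    apply c.j1_inj
    rw [hH3 _ hl ψ _ hGψ, add_zero] at hRhat
    rw [map_add, ← hRhat, map_zero]
  have hφ : φ = -χ :=
    eq_neg_of_add_eq_zero_right (c.RF_injective hl (by rw [map_add, hRF, map_zero]))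
  have hψ0 : ψ0 = 0 := by rw [← hRF, ← hR]; abel
  rw [hψ0, hφ] at hA
  simpa using hA

lemma inner_Rhat_lam (hl : (lam : ℂ) ∈ c.res) {χ χ' ψ φ φ' : F} {ψ0 ψ0' : H1}
    (hψ0 : c.j1 ψ0 = ψ - c.G lam ψ)
    (hRhat : c.Rhat lam Λ₀ χ = c.j1 (c.RF lam χ) + c.G lam ψ + c.j1 (c.RF lam φ))
    (hA' : S ψ0' - c.A (c.RF lam (S ψ0')) + φ' - c.A (c.RF lam φ') = c.A (c.RF lam χ'))
    (hR' : ψ0' - c.RF lam φ' = c.RF lam χ') :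
    ⟪c.Rhat lam Λ₀ χ, χ'⟫ = ⟪c.j1 (c.RF lam χ), χ'⟫ + ⟪c.j1 ψ0, S ψ0' + φ'⟫
      + ⟪φ, c.j1 ψ0'⟫ - ⟪φ, c.j1 (c.RF lam φ')⟫ := by
  have hGψ : ⟪c.G lam ψ, χ'⟫ = ⟪c.j1 ψ0, S ψ0' + φ'⟫ := by
    have hARF : c.A (c.RF lam χ') = (S ψ0' + φ') - c.A (c.RF lam (S ψ0' + φ')) := by
      rw [← hA', map_add, map_add]
      abel
    rw [c.inner_G_left, Complex.conj_ofReal, hARF, inner_sub_right, ← Complex.conj_ofReal,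
      ← c.inner_G_left, ← inner_sub_left, hψ0]
  have hRFφ : ⟪c.j1 (c.RF lam φ), χ'⟫ = ⟪φ, c.j1 ψ0'⟫ - ⟪φ, c.j1 (c.RF lam φ')⟫ := by
    rw [c.inner_RF_real hl, ← hR', map_sub, inner_sub_right]
  rw [hRhat, inner_add_left, inner_add_left, hGψ, hRFφ]
  ring

lemma Rhat_lam_isSymmetric (hl : (lam : ℂ) ∈ c.res) (hS : c.IsSymmOp S)
    (h₀ : c.IsInvTheta lam S lam Λ₀) : (c.Rhat lam Λ₀ : F →ₗ[ℂ] F).IsSymmetric := by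
  intro χ χ'
  obtain ⟨ψ, ψ0, φ, hψ0, hA, hR, hRhat⟩ := c.exists_Rhat_lam_eq hl h₀ χ
  obtain ⟨ψ', ψ0', φ', hψ0', hA', hR', hRhat'⟩ := c.exists_Rhat_lam_eq hl h₀ χ'
  rw [ContinuousLinearMap.coe_coe, ← inner_conj_symm χ, c.inner_Rhat_lam hl hψ0 hRhat hA' hR',
    c.inner_Rhat_lam hl hψ0' hRhat' hA hR]
  simp only [map_add, map_sub, inner_conj_symm, inner_add_right]
  rw [c.inner_RF_real hl χ χ', hS, c.inner_RF_real hl φ φ']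
  ring

end Ctx

open scoped LinearPMap

theorem statement7_general (c : Ctx F H1 Hm1) (lam : ℝ)
    (hH3 : c.H3) (S : H1 →ₗ[ℂ] F) (hS : c.IsSymmOp S)
    (hZ : (lam : ℂ) ∈ c.ZS lam S) :
    ∃ T : F →ₗ.[ℂ] F, IsSelfAdjoint T ∧ Dense (T.domain : Set F) ∧
      ∀ z ∈ c.ZS lam S, ∀ Λ : (F × H1) →L[ℂ] (F × Hm1), c.IsInvTheta lam S z Λ →
        (∀ x : T.domain, c.Rhat z Λ (z • (x : F) - T x) = (x : F)) ∧
        (∀ χ : F, ∃ x : T.domain, c.Rhat z Λ χ = (x : F) ∧ z • (x : F) - T x = χ) := by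
  obtain ⟨hl, Λ₀, h₀⟩ := hZ
  have hsa := LinearPMap.isSelfAdjoint_ofResolvent (c.Rhat_lam_isSymmetric hl hS h₀)
    (c.Rhat_lam_injective hl hH3 h₀) lam
  refine ⟨_, hsa, hsa.dense_domain, ?_⟩
  rintro z ⟨hz, -⟩ Λ hΛ
  exact LinearPMap.ofResolvent_resolvent_of_identity (R := (c.Rhat z Λ : F →ₗ[ℂ] F))
    (c.Rhat_sub_Rhat hl hz hl h₀ hΛ) (c.Rhat_sub_Rhat hz hl hl hΛ h₀)

/-- Let `H` be self-adjoint and bounded from below, let `A ∈ 𝔅(𝔥₁,𝔉)`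
satisfy assumption (H3), and suppose `λ∘ ∈ Z_S`.  Then the family of bounded operators
`R̂_z := R_z + 𝔾_z (Θ_S + M_z)⁻¹ 𝔾_{z̄}*`, `z ∈ Z_S`, is the resolvent of a (densely
defined) self-adjoint operator in `𝔉`. -/
theorem statement7 (c : Ctx F H1 Hm1) (lam : ℝ) (hlam : lam < c.lamInf)
    (hH3 : c.H3) (S : H1 →ₗ[ℂ] F) (hS : c.IsSymmOp S)
    (hZ : (lam : ℂ) ∈ c.ZS lam S) :
    ∃ T : F →ₗ.[ℂ] F, IsSelfAdjoint T ∧ Dense (T.domain : Set F) ∧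
      ∀ z ∈ c.ZS lam S, ∀ Λ : (F × H1) →L[ℂ] (F × Hm1), c.IsInvTheta lam S z Λ →
        (∀ x : T.domain, c.Rhat z Λ (z • (x : F) - T x) = (x : F)) ∧
        (∀ χ : F, ∃ x : T.domain, c.Rhat z Λ χ = (x : F) ∧ z • (x : F) - T x = χ) :=
  statement7_general c lam hH3 S hS hZ
end
end

section
/- Suppose A ∈ 𝔅(𝔥_s,𝔉) for some s ∈ (0,1) and that the symmetric operator S is H-small with constants a ∈ [0,1), b ∈ ℝ. If λ∘ < λ_inf − max{√(λ_inf² + 1), ‖A‖_{𝔅(𝔥_s,𝔉)}^{1/(1−s)}, b/(1−a)}, then λ∘ ∈ Z_S. -/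
open scoped InnerProductSpace ComplexConjugate

noncomputable section

local notation "⟪" x ", " y "⟫" => @inner ℂ _ _ x y

variable {F H1 Hm1 : Type*}
  [NormedAddCommGroup F] [InnerProductSpace ℂ F] [CompleteSpace F]
  [NormedAddCommGroup H1] [InnerProductSpace ℂ H1] [CompleteSpace H1]
  [NormedAddCommGroup Hm1] [InnerProductSpace ℂ Hm1] [CompleteSpace Hm1]

/-! At `z = λ∘` the term `M_z` vanishes and `Θ_S (ψ ⊕ φ) = (1 - G*)(Sψ₀ + φ) ⊕ (ψ₀ - Rφ)` with
`ψ₀ = (1 - G)ψ`, so `Θ_S` can be inverted explicitly as soon as `1 - G`, `1 - G*` and `1 + SR` are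
invertible. By Neumann series this holds once `‖G*‖ = ‖AR‖ < 1` and `‖SR‖ < 1`, and both bounds
follow from the resolvent estimates `‖R‖_{𝔉 → 𝔥₁} ≤ 1` and `‖R‖_{𝔉 → 𝔉} ≤ (λ_inf - λ∘)⁻¹`, combined
with interpolation for `A ∈ 𝔅(𝔥_s, 𝔉)`. These estimates come from the form bound `H ≥ λ_inf`, which
holds because, by the resolvent identity, `R_x` (for `x < λ_inf`) is a self-adjoint operator
without spectrum in `(0, ∞)`. -/

lemma add_max_div_lt_one {a b d : ℝ} (ha : a < 1) (hd : b / (1 - a) < d) (hd0 : 0 < d) :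
    a + max b 0 / d < 1 := by
  rcases le_total b 0 with hb | hb
  · simpa [max_eq_right hb] using ha
  · rw [max_eq_left hb, ← lt_sub_iff_add_lt', div_lt_iff₀ hd0]
    rwa [div_lt_iff₀ (sub_pos.mpr ha), mul_comm] at hd

lemma div_rpow_lt_one {C d t : ℝ} (hC : 0 ≤ C) (ht : 0 < t) (hd : C ^ (1 / t) < d) :
    C / d ^ t < 1 := by
  have hd0 : 0 < d := (Real.rpow_nonneg hC _).trans_lt hd
  rw [div_lt_one (Real.rpow_pos_of_pos hd0 t)]
  calc C = (C ^ (1 / t)) ^ t := by rw [one_div, Real.rpow_inv_rpow hC ht.ne']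
    _ < d ^ t := Real.rpow_lt_rpow (Real.rpow_nonneg hC _) hd ht

lemma isUnit_sub_inv_smul_one_of_sub_eq_smul_mul {𝕜 A : Type*} [Field 𝕜] [Ring A] [Algebra 𝕜 A]
    {a b : A} {t : 𝕜} (ht : t ≠ 0) (hab : b - a = t • (a * b)) (hcomm : Commute a b) :
    IsUnit (a - t⁻¹ • 1) := by
  have htt : t * t⁻¹ = 1 := mul_inv_cancel₀ ht
  refine ⟨⟨a - t⁻¹ • 1, -t • (1 + t • b), ?_, ?_⟩, rfl⟩
  · simp only [mul_add, sub_mul, mul_one, one_mul, smul_mul_assoc, mul_smul_comm, smul_add,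
      smul_sub, smul_smul]
    linear_combination (norm := module) t • hab + htt • (1 + t • b)
  · simp only [add_mul, mul_sub, mul_one, one_mul, smul_mul_assoc, mul_smul_comm, smul_add,
      smul_smul, ← hcomm.eq]
    linear_combination (norm := module) t • hab + htt • (1 + t • b)

namespace Ctx

variable (c : Ctx F H1 Hm1)

def resolventOp (z : ℂ) : F →L[ℂ] F :=
  c.j1.comp (c.RF z)

variable {c}

lemma RF_smul_j1_sub_Hop {z : ℂ} (hz : z ∈ c.res) (ψ : H1) :
    c.RF z (z • c.j1 ψ - c.Hop ψ) = ψ := by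
  simpa using congr($(c.RF_inv_left z hz) ψ)

lemma smul_j1_sub_Hop_RF {z : ℂ} (hz : z ∈ c.res) (φ : F) :
    z • c.j1 (c.RF z φ) - c.Hop (c.RF z φ) = φ := by
  simpa using congr($(c.RF_inv_right z hz) φ)

lemma resolventOp_sub_resolventOp {z w : ℂ} (hz : z ∈ c.res) (hw : w ∈ c.res) :
    c.resolventOp w - c.resolventOp z = (z - w) • (c.resolventOp z * c.resolventOp w) := by
  ext φ
  have h := RF_smul_j1_sub_Hop hz (c.RF w φ)
  rw [show z • c.j1 (c.RF w φ) - c.Hop (c.RF w φ)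
      = (z - w) • c.j1 (c.RF w φ) + (w • c.j1 (c.RF w φ) - c.Hop (c.RF w φ)) by
    rw [sub_smul]; abel, smul_j1_sub_Hop_RF hw, map_add, map_smul] at h
  simp only [resolventOp, sub_apply, smul_apply, mul_apply_eq_comp,
    ContinuousLinearMap.comp_apply]
  exact sub_eq_of_eq_add (by simpa only [map_add, map_smul] using congr(c.j1 $h.symm))

lemma commute_resolventOp {z w : ℂ} (hz : z ∈ c.res) (hw : w ∈ c.res) :
    Commute (c.resolventOp z) (c.resolventOp w) := by
  rcases eq_or_ne z w with rfl | hzw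
  · exact Commute.refl _
  have h₁ := resolventOp_sub_resolventOp hz hw
  have h₂ := resolventOp_sub_resolventOp hw hz
  rw [← neg_sub, h₂, ← neg_smul, neg_sub] at h₁
  exact (smul_right_injective _ (sub_ne_zero.mpr hzw) h₁).symm

lemma isSelfAdjoint_resolventOp {x : ℝ} (hx : (x : ℂ) ∈ c.res) :
    IsSelfAdjoint (c.resolventOp x) := by
  rw [ContinuousLinearMap.isSelfAdjoint_iff_isSymmetric]
  intro φ φ'
  simp only [resolventOp, ContinuousLinearMap.coe_coe, ContinuousLinearMap.comp_apply]
  conv_lhs => rw [← smul_j1_sub_Hop_RF hx φ']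
  conv_rhs => rw [← smul_j1_sub_Hop_RF hx φ]
  rw [inner_sub_right, inner_smul_right, c.Hsymm, inner_sub_left, inner_smul_left,
    Complex.conj_ofReal]

lemma resolventOp_nonpos {x : ℝ} (hx : x < c.lamInf) : c.resolventOp x ≤ 0 := by
  have hxres := c.res_below x hx
  rw [← neg_nonneg, StarOrderedRing.nonneg_iff_spectrum_nonneg (R := ℝ) _
    (isSelfAdjoint_resolventOp hxres).neg]
  intro r hr
  by_contra! hr0
  -- for `r < 0` the resolvent identity at `x + r⁻¹ < λ_inf` inverts `R_x + r`
  have hw : ((x + r⁻¹ : ℝ) : ℂ) ∈ c.res := c.res_below _ (by linarith [inv_lt_zero.mpr hr0])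
  have ht : (x : ℂ) - (x + r⁻¹ : ℝ) ≠ 0 := by
    push_cast; simpa using hr0.ne
  refine spectrum.mem_iff.mp hr ?_
  convert isUnit_sub_inv_smul_one_of_sub_eq_smul_mul ht
    (resolventOp_sub_resolventOp hxres hw) (commute_resolventOp hxres hw) using 1
  rw [Algebra.algebraMap_eq_smul_one, ← Complex.coe_smul]
  push_cast
  simp only [sub_add_cancel_left, inv_neg, inv_inv, neg_smul]
  abel

lemma lamInf_mul_norm_sq_le_re_inner (ψ : H1) :
    c.lamInf * ‖c.j1 ψ‖ ^ 2 ≤ (⟪c.j1 ψ, c.Hop ψ⟫).re := by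
  have key : ∀ x < c.lamInf, x * ‖c.j1 ψ‖ ^ 2 ≤ (⟪c.j1 ψ, c.Hop ψ⟫).re := by
    intro x hx
    have hpos := ((ContinuousLinearMap.nonneg_iff_isPositive _).mp
      (neg_nonneg.mpr (resolventOp_nonpos hx))).re_inner_nonneg_left
        ((x : ℂ) • c.j1 ψ - c.Hop ψ)
    rw [neg_apply, resolventOp, ContinuousLinearMap.comp_apply,
      RF_smul_j1_sub_Hop (c.res_below x hx), inner_neg_left, inner_sub_right, inner_smul_right,
      inner_self_eq_norm_sq_to_K] at hpos
    simpa [← Complex.ofReal_pow] using hpos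
  exact le_of_tendsto ((continuous_mul_const _).tendsto _ |>.mono_left nhdsWithin_le_nhds)
    (eventually_nhdsWithin_of_forall (s := Set.Iio c.lamInf) key)

lemma mul_norm_j1_le_norm_smul_sub_Hop (lam : ℝ) (ψ : H1) :
    (c.lamInf - lam) * ‖c.j1 ψ‖ ≤ ‖(lam : ℂ) • c.j1 ψ - c.Hop ψ‖ := by
  have hq := lamInf_mul_norm_sq_le_re_inner (c := c) ψ
  have hcs : (⟪c.j1 ψ, c.Hop ψ - (lam : ℂ) • c.j1 ψ⟫).re
      ≤ ‖c.j1 ψ‖ * ‖(lam : ℂ) • c.j1 ψ - c.Hop ψ‖ := by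
    rw [norm_sub_rev]
    exact (Complex.re_le_norm _).trans (norm_inner_le_norm _ _)
  rw [inner_sub_right, inner_smul_right, Complex.sub_re, Complex.re_ofReal_mul,
    show (⟪c.j1 ψ, c.j1 ψ⟫).re = ‖c.j1 ψ‖ ^ 2 from inner_self_eq_norm_sq (𝕜 := ℂ) _] at hcs
  rcases (norm_nonneg (c.j1 ψ)).eq_or_lt with h0 | h0
  · rw [← h0, mul_zero]; exact norm_nonneg _
  · exact le_of_mul_le_mul_right (by nlinarith) h0

lemma norm_le_norm_smul_sub_Hop {lam : ℝ} (hlam : lam < c.lamInf)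
    (hd : c.lamInf ^ 2 + 1 ≤ (c.lamInf - lam) ^ 2) (ψ : H1) :
    ‖ψ‖ ≤ ‖(lam : ℂ) • c.j1 ψ - c.Hop ψ‖ := by
  have hq := lamInf_mul_norm_sq_le_re_inner (c := c) ψ
  have hneg : lam < 0 := by nlinarith
  -- `hd` reads `λ² - 2λλ_inf ≥ 1`, and `-2λ ≥ 0` lets `hq` bound the cross term below
  have hexp : ‖(lam : ℂ) • c.j1 ψ - c.Hop ψ‖ ^ 2
      = lam ^ 2 * ‖c.j1 ψ‖ ^ 2 - 2 * lam * (⟪c.j1 ψ, c.Hop ψ⟫).re + ‖c.Hop ψ‖ ^ 2 := by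
    rw [@norm_sub_sq ℂ, inner_smul_left, norm_smul, Complex.conj_ofReal, RCLike.re_to_complex,
      Complex.re_ofReal_mul, Complex.norm_real, Real.norm_eq_abs, mul_pow, sq_abs]
    ring
  refine le_of_pow_le_pow_left₀ two_ne_zero (norm_nonneg _) ?_
  rw [c.norm1_sq, hexp]
  nlinarith [sq_nonneg ‖c.j1 ψ‖]

lemma norm_j1_le (ψ : H1) : ‖c.j1 ψ‖ ≤ ‖ψ‖ :=
  (pow_le_pow_iff_left₀ (norm_nonneg _) (norm_nonneg _) two_ne_zero).mp <| by
    rw [c.norm1_sq ψ]; exact le_add_of_nonneg_right (sq_nonneg _)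

lemma norm_Hop_le (ψ : H1) : ‖c.Hop ψ‖ ≤ ‖ψ‖ :=
  (pow_le_pow_iff_left₀ (norm_nonneg _) (norm_nonneg _) two_ne_zero).mp <| by
    rw [c.norm1_sq ψ]; exact le_add_of_nonneg_left (sq_nonneg _)

lemma HSmall.norm_apply_le {S : H1 →ₗ[ℂ] F} {a b : ℝ} (hsmall : c.HSmall S a b) (ha : 0 ≤ a)
    (ψ : H1) : ‖S ψ‖ ≤ (a + max b 0) * ‖ψ‖ :=
  calc ‖S ψ‖ ≤ a * ‖c.Hop ψ‖ + b * ‖c.j1 ψ‖ := hsmall ψ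
    _ ≤ a * ‖ψ‖ + max b 0 * ‖ψ‖ := by
      gcongr
      exacts [norm_Hop_le ψ, le_max_left b 0, norm_j1_le ψ]
    _ = (a + max b 0) * ‖ψ‖ := by ring

lemma Gst_eq (lam : ℝ) : c.Gst lam = c.A.comp (c.RF lam) := by
  rw [Gst, G, Complex.conj_ofReal, ContinuousLinearMap.adjoint_adjoint]

lemma thetaMS_self (lam : ℝ) (S : H1 →ₗ[ℂ] F) (ψ : F) (ψ0 : H1) (φ : F) :
    c.ThetaMS lam S lam ψ ψ0 φ = ((1 - c.Gst lam) (S ψ0 + φ), ψ0 - c.RF lam φ) := by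
  simp only [ThetaMS, M, sub_self, zero_smul, zero_apply, add_zero, ThetaS,
    sub_apply, one_apply_eq_self, map_add]
  refine Prod.ext ?_ rfl
  simp only
  abel

lemma exists_isInvTheta {lam : ℝ} (S : H1 →L[ℂ] F) (hGst : IsUnit (1 - c.Gst lam))
    (hK : IsUnit (1 + S.comp (c.RF lam))) :
    ∃ Λ : (F × H1) →L[ℂ] (F × Hm1), c.IsInvTheta lam S lam Λ := by
  have hG : IsUnit (1 - c.G lam) := by
    simpa [Gst, ← ContinuousLinearMap.star_eq_adjoint] using hGst.star
  obtain ⟨eG, heG⟩ : ∃ e : F ≃L[ℂ] F, ∀ x, e x = x - c.G lam x :=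
    ⟨.unitsEquiv ℂ F hG.unit, fun x => by simp⟩
  obtain ⟨eGst, heGst⟩ : ∃ e : F ≃L[ℂ] F, ∀ x, e x = x - c.Gst lam x :=
    ⟨.unitsEquiv ℂ F hGst.unit, fun x => by simp⟩
  obtain ⟨eK, heK⟩ : ∃ e : F ≃L[ℂ] F, ∀ x, e x = x + S (c.RF lam x) :=
    ⟨.unitsEquiv ℂ F hK.unit, fun x => by simp⟩
  have hGst_apply : ∀ x, (1 - c.Gst lam) x = eGst x := fun x => by
    rw [heGst, sub_apply, one_apply_eq_self]
  let Φ : (F × H1) →L[ℂ] F := (eK.symm : F →L[ℂ] F).comp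
    ((eGst.symm : F →L[ℂ] F).comp (.fst ℂ F H1) - S.comp (.snd ℂ F H1))
  let Ψ : (F × H1) →L[ℂ] H1 := .snd ℂ F H1 + (c.RF lam).comp Φ
  have hΦ : ∀ y, eK (Φ y) = eGst.symm y.1 - S y.2 := fun y => by simp [Φ]
  have hΨ : ∀ y, Ψ y = y.2 + c.RF lam (Φ y) := fun y => rfl
  refine ⟨((eG.symm : F →L[ℂ] F).comp (c.j1.comp Ψ)).prod (c.jm.comp Φ), ?_, ?_⟩
  · intro ψ ψ0 φ hψ0
    have hφ : Φ ((1 - c.Gst lam) (S ψ0 + φ), ψ0 - c.RF lam φ) = φ := by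
      apply eK.injective
      rw [hΦ, heK, hGst_apply, eGst.symm_apply_apply, map_sub]
      abel
    have hψ : eG.symm (c.j1 ψ0) = ψ := by rw [hψ0, ← heG, eG.symm_apply_apply]
    rw [thetaMS_self, ContinuousLinearMap.coe_coe]
    simp only [ContinuousLinearMap.prod_apply, ContinuousLinearMap.comp_apply, hΨ, hφ,
      sub_add_cancel, ContinuousLinearEquiv.coe_coe, hψ]
  · rintro ⟨χ1, χ2⟩
    refine ⟨eG.symm (c.j1 (Ψ (χ1, χ2))), Ψ (χ1, χ2), Φ (χ1, χ2),
      by rw [← heG, eG.apply_symm_apply], rfl, ?_⟩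
    have hfst : S (Ψ (χ1, χ2)) + Φ (χ1, χ2) = eGst.symm χ1 := by
      rw [hΨ, map_add, add_assoc, add_comm (S (c.RF lam _)), ← heK, hΦ]
      abel
    rw [thetaMS_self, ContinuousLinearMap.coe_coe, hfst, hGst_apply, eGst.apply_symm_apply, hΨ,
      add_sub_cancel_right]

variable {lam : ℝ}

lemma norm_RF_le (hlam : lam < c.lamInf) (hd : c.lamInf ^ 2 + 1 ≤ (c.lamInf - lam) ^ 2)
    (φ : F) : ‖c.RF lam φ‖ ≤ ‖φ‖ := by
  simpa only [smul_j1_sub_Hop_RF (c.res_below lam hlam)] using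
    norm_le_norm_smul_sub_Hop hlam hd (c.RF lam φ)

lemma norm_j1_RF_le (hlam : lam < c.lamInf) (φ : F) :
    ‖c.j1 (c.RF lam φ)‖ ≤ ‖φ‖ / (c.lamInf - lam) := by
  rw [le_div_iff₀' (sub_pos.mpr hlam)]
  simpa only [smul_j1_sub_Hop_RF (c.res_below lam hlam)] using
    mul_norm_j1_le_norm_smul_sub_Hop (c := c) lam (c.RF lam φ)

lemma HSmall.norm_apply_RF_le {S : H1 →ₗ[ℂ] F} {a b : ℝ} (hsmall : c.HSmall S a b)
    (ha : 0 ≤ a) (hlam : lam < c.lamInf) (hd : c.lamInf ^ 2 + 1 ≤ (c.lamInf - lam) ^ 2)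
    (φ : F) : ‖S (c.RF lam φ)‖ ≤ (a + max b 0 / (c.lamInf - lam)) * ‖φ‖ :=
  calc ‖S (c.RF lam φ)‖ ≤ a * ‖c.Hop (c.RF lam φ)‖ + b * ‖c.j1 (c.RF lam φ)‖ := hsmall _
    _ ≤ a * ‖φ‖ + max b 0 * (‖φ‖ / (c.lamInf - lam)) := by
      gcongr
      exacts [(norm_Hop_le _).trans (norm_RF_le hlam hd φ), le_max_left b 0,
        norm_j1_RF_le hlam φ]
    _ = (a + max b 0 / (c.lamInf - lam)) * ‖φ‖ := by ring

lemma norm_A_RF_le {s CA : ℝ} (hs0 : 0 ≤ s) (hs1 : s ≤ 1) (hCA : 0 ≤ CA)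
    (hA : ∀ ψ : H1, ‖c.A ψ‖ ≤ CA * c.ns s ψ) (hlam : lam < c.lamInf)
    (hd : c.lamInf ^ 2 + 1 ≤ (c.lamInf - lam) ^ 2) (φ : F) :
    ‖c.A (c.RF lam φ)‖ ≤ CA / (c.lamInf - lam) ^ (1 - s) * ‖φ‖ :=
  calc ‖c.A (c.RF lam φ)‖ ≤ CA * (‖c.RF lam φ‖ ^ s * ‖c.j1 (c.RF lam φ)‖ ^ (1 - s)) :=
        (hA _).trans (mul_le_mul_of_nonneg_left (c.ns_interp s hs0 hs1 _) hCA)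
    _ ≤ CA * (‖φ‖ ^ s * (‖φ‖ / (c.lamInf - lam)) ^ (1 - s)) := by
      gcongr
      exacts [norm_RF_le hlam hd φ, norm_j1_RF_le hlam φ]
    _ = CA / (c.lamInf - lam) ^ (1 - s) * ‖φ‖ := by
      rw [Real.div_rpow (norm_nonneg _) (sub_pos.mpr hlam).le, mul_div_assoc',
        ← Real.rpow_add' (norm_nonneg _) (by norm_num), add_sub_cancel, Real.rpow_one]
      ring

end Ctx

theorem statement9_general (c : Ctx F H1 Hm1)
    (s : ℝ) (hs : s ∈ Set.Ioo (0 : ℝ) 1)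
    (CA : ℝ) (hCA : 0 ≤ CA) (hA : ∀ ψ : H1, ‖c.A ψ‖ ≤ CA * c.ns s ψ)
    (S : H1 →ₗ[ℂ] F)
    (a b : ℝ) (ha0 : 0 ≤ a) (ha1 : a < 1) (hsmall : c.HSmall S a b)
    (lam : ℝ)
    (hlam : lam < c.lamInf -
      max (max (Real.sqrt (c.lamInf ^ 2 + 1)) (CA ^ (1 / (1 - s)))) (b / (1 - a))) :
    (lam : ℂ) ∈ c.ZS lam S := by
  obtain ⟨hs0, hs1⟩ := hs
  obtain ⟨⟨hd1, hd2⟩, hd3⟩ : (√(c.lamInf ^ 2 + 1) < c.lamInf - lam ∧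
      CA ^ (1 / (1 - s)) < c.lamInf - lam) ∧ b / (1 - a) < c.lamInf - lam := by
    simpa only [max_lt_iff] using lt_sub_comm.mp hlam
  have hd0 : 0 < c.lamInf - lam := (Real.sqrt_nonneg _).trans_lt hd1
  have hd : c.lamInf ^ 2 + 1 ≤ (c.lamInf - lam) ^ 2 := ((Real.sqrt_lt' hd0).mp hd1).le
  have hlt : lam < c.lamInf := sub_pos.mp hd0
  let Scl : H1 →L[ℂ] F := S.mkContinuous _ (hsmall.norm_apply_le ha0)
  have hK : ‖-Scl.comp (c.RF lam)‖ < 1 := by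
    rw [norm_neg]
    exact (ContinuousLinearMap.opNorm_le_bound _ (by positivity)
      (hsmall.norm_apply_RF_le ha0 hlt hd)).trans_lt (add_max_div_lt_one ha1 hd3 hd0)
  have hG : ‖c.Gst lam‖ < 1 := by
    rw [Ctx.Gst_eq]
    exact (ContinuousLinearMap.opNorm_le_bound _ (by positivity)
      (Ctx.norm_A_RF_le hs0.le hs1.le hCA hA hlt hd)).trans_lt
      (div_rpow_lt_one hCA (sub_pos.mpr hs1) hd2)
  refine ⟨c.res_below lam hlt, Ctx.exists_isInvTheta Scl (isUnit_one_sub_of_norm_lt_one hG) ?_⟩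
  simpa using isUnit_one_sub_of_norm_lt_one hK

/-- Suppose `A ∈ 𝔅(𝔥_s,𝔉)` for some `s ∈ (0,1)` and that the symmetric
operator `S` is `H`-small with constants `a ∈ [0,1)`, `b`.  If
`λ∘ < λ_inf - max{√(λ_inf²+1), ‖A‖_{𝔅(𝔥_s,𝔉)}^(1/(1-s)), b/(1-a)}`, then `λ∘ ∈ Z_S`. -/
theorem statement9 (c : Ctx F H1 Hm1)
    (s : ℝ) (hs : s ∈ Set.Ioo (0 : ℝ) 1)
    (CA : ℝ) (hCA : 0 ≤ CA) (hA : ∀ ψ : H1, ‖c.A ψ‖ ≤ CA * c.ns s ψ)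
    (S : H1 →ₗ[ℂ] F) (hS : c.IsSymmOp S)
    (a b : ℝ) (ha0 : 0 ≤ a) (ha1 : a < 1) (hsmall : c.HSmall S a b)
    (lam : ℝ)
    (hlam : lam < c.lamInf -
      max (max (Real.sqrt (c.lamInf ^ 2 + 1)) (CA ^ (1 / (1 - s)))) (b / (1 - a))) :
    (lam : ℂ) ∈ c.ZS lam S :=
  statement9_general c s hs CA hCA hA S a b ha0 ha1 hsmall lam hlam
end
end
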